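/- arXiv:2405.03511 — 3 statements merged into one kernel-verified Lean document; each statement's English description precedes it below -/
import Mathlib

section
/- Let q = ρ₀ ∧ o₁(ρ₁ ∧ … ∧ oₙ ρₙ) and q′ = ρ₀′ ∧ o₁′(ρ₁′ ∧ … ∧ oₘ′ ρₘ′) be path ○◇-queries in normal form. Then q ⊨ q′ if and only if there is a monotone function h : {0,…,m} → {0,…,n} (i.e., h(i) < h(j) whenever i < j) such that h(0) = 0 and, for all i ∈ {0,…,m}: ρᵢ′ ⊆ ρ_{h(i)}, and if o′_{i+1} = ○ then o_{h(i+1)} = ○ and h(i+1) = h(i)+1. -/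
/-- Atoms are natural numbers (a countably infinite supply). -/
abbrev Atom : Type := ℕ

/-- A (temporal) data instance: a finite set of facts `(A, ℓ)`, i.e. `A(ℓ)`. -/
abbrev Inst : Type := Finset (Atom × ℕ)

/-- LTL queries built from atoms and ⊤ using ∧, ○ (next) and ◇ (strict eventually). -/
inductive Query : Type where
  | top : Query
  | atom : Atom → Query
  | and : Query → Query → Query
  | next : Query → Query
  | evtl : Query → Query
  deriving DecidableEq

/-- Strict semantics: `Query.sat D q m` says `D, m ⊨ q`. -/
def Query.sat (D : Inst) : Query → ℕ → Prop
  | .top, _ => True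
  | .atom a, m => (a, m) ∈ D
  | .and q₁ q₂, m => Query.sat D q₁ m ∧ Query.sat D q₂ m
  | .next q, m => Query.sat D q (m + 1)
  | .evtl q, m => ∃ m', m < m' ∧ Query.sat D q m'

/-- `q ⊨ q'`: every (nonempty) data instance satisfying `q` at 0 satisfies `q'` at 0. -/
def Entails (q q' : Query) : Prop :=
  ∀ D : Inst, D.Nonempty → Query.sat D q 0 → Query.sat D q' 0

/-- `q ≡ q'`. -/
def QEquiv (q q' : Query) : Prop := Entails q q' ∧ Entails q' q

/-- Temporal operators ○ (next) and ◇ (eventually). -/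
inductive TOp : Type where
  | next : TOp
  | evtl : TOp
  deriving DecidableEq

def TOp.apply : TOp → Query → Query
  | .next, q => Query.next q
  | .evtl, q => Query.evtl q

/-- Conjunction of a finite set of atoms (the empty set standing for ⊤). -/
noncomputable def conjQ (ρ : Finset Atom) : Query :=
  ρ.toList.foldr (fun a q => Query.and (Query.atom a) q) Query.top

/-- `pathFrom ρ o i k` is the path query `ρᵢ ∧ o_{i+1}(ρ_{i+1} ∧ ⋯ ∧ o_{i+k} ρ_{i+k})`. -/
noncomputable def pathFrom (ρ : ℕ → Finset Atom) (o : ℕ → TOp) : ℕ → ℕ → Query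
  | i, 0 => conjQ (ρ i)
  | i, k + 1 => Query.and (conjQ (ρ i)) ((o (i + 1)).apply (pathFrom ρ o (i + 1) k))

/-- The path ○◇-query `ρ₀ ∧ o₁(ρ₁ ∧ ⋯ ∧ oₙ ρₙ)`. -/
noncomputable def pathQ (n : ℕ) (ρ : ℕ → Finset Atom) (o : ℕ → TOp) : Query := pathFrom ρ o 0 n

/-- `q` separates the example set `(E⁺, E⁻)`. -/
def Separates (Ep En : Finset Inst) (q : Query) : Prop :=
  (∀ D ∈ Ep, Query.sat D q 0) ∧ ∀ D ∈ En, ¬ Query.sat D q 0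

/-- A path ○◇-query (given as `n`, `ρ`, `o`) is in normal form. -/
def NormalForm (n : ℕ) (ρ : ℕ → Finset Atom) (o : ℕ → TOp) : Prop :=
  ρ n ≠ ∅ ∧ ∀ i, 0 < i → i < n → ρ i = ∅ → o i = o (i + 1)

-- ### basic sat lemmas

lemma sat_conjQ (D : Inst) (s : Finset Atom) (t : ℕ) :
    Query.sat D (conjQ s) t ↔ ∀ a ∈ s, (a, t) ∈ D := by
  unfold conjQ
  have : ∀ L : List Atom, Query.sat D (L.foldr (fun a q => Query.and (Query.atom a) q) Query.top) t
      ↔ ∀ a ∈ L, (a, t) ∈ D := by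
    intro L
    induction L with
    | nil => simp [Query.sat]
    | cons a L ih => simp [Query.sat, ih]
  rw [this]
  constructor
  · intro h a ha; exact h a (by simpa using ha)
  · intro h a ha; exact h a (by simpa using ha)

lemma sat_pathFrom (D : Inst) (ρ : ℕ → Finset Atom) (o : ℕ → TOp) :
    ∀ (k i t : ℕ), Query.sat D (pathFrom ρ o i k) t ↔
      ∃ f : ℕ → ℕ, f i = t ∧ (∀ l, i ≤ l → l ≤ i + k → ∀ a ∈ ρ l, (a, f l) ∈ D) ∧
        ∀ l, i ≤ l → l < i + k → f l < f (l + 1) ∧ (o (l + 1) = TOp.next → f (l + 1) = f l + 1) := by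
  intro k
  induction k with
  | zero =>
    intro i t
    simp only [pathFrom, sat_conjQ]
    constructor
    · intro h
      refine ⟨fun _ => t, rfl, ?_, by intro l hl hl'; omega⟩
      intro l hl hl'
      have : l = i := by omega
      subst this; simpa using h
    · rintro ⟨f, rfl, hf, -⟩
      simpa using hf i le_rfl (by omega)
  | succ k ih =>
    intro i t
    have hnext : ∀ q, Query.sat D ((o (i+1)).apply q) t ↔
        (o (i+1) = TOp.next ∧ Query.sat D q (t+1)) ∨
        (o (i+1) = TOp.evtl ∧ ∃ t', t < t' ∧ Query.sat D q t') := by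
      intro q
      cases h : o (i+1) <;> simp [TOp.apply, Query.sat]
    constructor
    · intro h
      rcases h with ⟨h1, h2⟩
      rw [hnext] at h2
      have key : ∃ t', t < t' ∧ (o (i+1) = TOp.next → t' = t + 1) ∧
          Query.sat D (pathFrom ρ o (i+1) k) t' := by
        rcases h2 with ⟨ho, hs⟩ | ⟨ho, t', ht', hs⟩
        · exact ⟨t+1, by omega, fun _ => rfl, hs⟩
        · exact ⟨t', ht', fun hc => absurd hc (by simp [ho]), hs⟩
      rcases key with ⟨t', htt', hexact, hs⟩
      rcases (ih (i+1) t').1 hs with ⟨f, hf0, hfacts, hsteps⟩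
      refine ⟨fun l => if l ≤ i then t else f l, by simp, ?_, ?_⟩
      · intro l hl hl' a ha
        by_cases hli : l ≤ i
        · have : l = i := le_antisymm hli hl
          subst this
          simpa [hli] using (sat_conjQ D (ρ l) t).1 h1 a ha
        · have : i + 1 ≤ l := by omega
          simpa [hli] using hfacts l this (by omega) a ha
      · intro l hl hl'
        by_cases hli : l ≤ i
        · have : l = i := le_antisymm hli hl
          subst this
          simp only [if_pos le_rfl, if_neg (by omega : ¬ l + 1 ≤ l)]
          exact ⟨by rw [hf0]; omega, fun ho => by rw [hf0, hexact ho]⟩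
        · have h1l : i + 1 ≤ l := by omega
          simp only [if_neg hli, if_neg (by omega : ¬ l + 1 ≤ i)]
          exact hsteps l h1l (by omega)
    · rintro ⟨f, rfl, hfacts, hsteps⟩
      constructor
      · exact (sat_conjQ D (ρ i) (f i)).2 (hfacts i le_rfl (by omega))
      · rw [hnext]
        have hs : Query.sat D (pathFrom ρ o (i+1) k) (f (i+1)) := by
          apply (ih (i+1) (f (i+1))).2
          exact ⟨f, rfl, fun l hl hl' => hfacts l (by omega) (by omega),
            fun l hl hl' => hsteps l (by omega) (by omega)⟩
        have hstep := hsteps i le_rfl (by omega)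
        cases ho : o (i+1) with
        | next =>
          left
          refine ⟨rfl, ?_⟩
          rw [← hstep.2 ho]; exact hs
        | evtl => exact Or.inr ⟨rfl, f (i+1), hstep.1, hs⟩

-- ### combinatorial layer

/-- Witness for containment between suffixes: `Wit i j` says the suffix of `q'` from `j`
maps into the suffix of `q` from `i` with `h j = i`. -/
def Wit (n m : ℕ) (ρ ρ' : ℕ → Finset Atom) (o o' : ℕ → TOp) (i j : ℕ) : Prop :=
  ∃ h : ℕ → ℕ, h j = i ∧ (∀ l, j ≤ l → l ≤ m → h l ≤ n) ∧
    (∀ l l', j ≤ l → l < l' → l' ≤ m → h l < h l') ∧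
    (∀ l, j ≤ l → l ≤ m → ρ' l ⊆ ρ (h l)) ∧
    (∀ l, j ≤ l → l < m → o' (l + 1) = TOp.next → o (h (l + 1)) = TOp.next ∧ h (l + 1) = h l + 1)

/-- Timeline with barrier set `B`: gaps are `m+1` at barriers, `1` elsewhere. -/
def tau (m : ℕ) (B : Finset ℕ) : ℕ → ℕ
  | 0 => 0
  | k + 1 => tau m B k + (if k + 1 ∈ B then m + 1 else 1)

/-- The canonical instance determined by the barrier set `B`. -/
noncomputable def DBI (n m : ℕ) (ρ : ℕ → Finset Atom) (B : Finset ℕ) : Inst :=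
  (Finset.range (n + 1)).biUnion fun k => (ρ k).image fun a => (a, tau m B k)

/-- Anchored embedding of the suffix of `q'` from `J` into the canonical instance,
starting at anchor position `κ`. -/
def EMB (n m : ℕ) (ρ ρ' : ℕ → Finset Atom) (o' : ℕ → TOp) (B : Finset ℕ) (κ J : ℕ) : Prop :=
  ∃ f : ℕ → ℕ, f J = tau m B κ ∧ ρ' J ⊆ ρ κ ∧
    (∀ l l', J ≤ l → l < l' → l' ≤ m → f l < f l') ∧
    (∀ l, J ≤ l → l < m → o' (l + 1) = TOp.next → f (l + 1) = f l + 1) ∧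
    (∀ l, J < l → l ≤ m → ρ' l ≠ ∅ → ∃ k, k ≤ n ∧ tau m B k = f l ∧ ρ' l ⊆ ρ k)

section TauLemmas

variable {m : ℕ} {B : Finset ℕ}

lemma tau_succ (k : ℕ) : tau m B (k+1) = tau m B k + (if k + 1 ∈ B then m + 1 else 1) := rfl

lemma tau_strictMono : StrictMono (tau m B) := by
  apply strictMono_nat_of_lt_succ
  intro k
  rw [tau_succ]
  split <;> omega

lemma tau_mono {a b : ℕ} (h : a ≤ b) : tau m B a ≤ tau m B b := tau_strictMono.monotone h

lemma tau_inj {a b : ℕ} (h : tau m B a = tau m B b) : a = b := tau_strictMono.injective h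

lemma tau_noB {a b : ℕ} (h : a ≤ b) (hB : ∀ p, a < p → p ≤ b → p ∉ B) :
    tau m B b = tau m B a + (b - a) := by
  induction b, h using Nat.le_induction with
  | base => simp
  | succ b hab ih =>
    rw [tau_succ, ih (fun p hp hp' => hB p hp (by omega)),
      if_neg (hB (b+1) (by omega) le_rfl)]
    omega

lemma tau_cross {a b p : ℕ} (hap : a < p) (hpb : p ≤ b) (hp : p ∈ B) :
    tau m B a + (m + 1) ≤ tau m B b := by
  obtain ⟨p', rfl⟩ : ∃ p', p = p' + 1 := ⟨p - 1, by omega⟩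
  have h1 : tau m B a ≤ tau m B p' := tau_mono (by omega)
  have h2 : tau m B (p' + 1) ≤ tau m B b := tau_mono hpb
  rw [tau_succ, if_pos hp] at h2
  omega

end TauLemmas

lemma mem_DBI {n m : ℕ} {ρ : ℕ → Finset Atom} {B : Finset ℕ} {a : Atom} {t : ℕ} :
    (a, t) ∈ DBI n m ρ B ↔ ∃ k, k ≤ n ∧ a ∈ ρ k ∧ t = tau m B k := by
  simp only [DBI, Finset.mem_biUnion, Finset.mem_range, Finset.mem_image, Prod.mk.injEq]
  constructor
  · rintro ⟨k, hk, a', ha', rfl, rfl⟩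
    exact ⟨k, by omega, ha', rfl⟩
  · rintro ⟨k, hk, ha, rfl⟩
    exact ⟨k, by omega, a, ha, rfl, rfl⟩

/-- From pairwise strict monotonicity, a gap bound. -/
lemma mono_gap {h : ℕ → ℕ} {j M' : ℕ}
    (hm : ∀ l l', j ≤ l → l < l' → l' ≤ M' → h l < h l') :
    ∀ l l', j ≤ l → l ≤ l' → l' ≤ M' → h l + (l' - l) ≤ h l' := by
  intro l l' hl hll' hl'M
  induction l', hll' using Nat.le_induction with
  | base => simp
  | succ l' hll' ih =>
    have h1 := hm l' (l' + 1) (le_trans hl hll') (by omega) hl'M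
    have h2 := ih (by omega)
    omega

/-- Exact chain along an all-○ block. -/
lemma chain_exact {o' : ℕ → TOp} {f : ℕ → ℕ} {j r m : ℕ} (hr2 : r ≤ m) (hjr : j < r)
    (hN : ∀ l, j ≤ l → l < m → o' (l + 1) = TOp.next → f (l + 1) = f l + 1)
    (hu : ∀ l, j < l → l ≤ r → o' l = o' (j + 1)) (hβ : o' (j + 1) = TOp.next) :
    f r = f j + (r - j) := by
  have key : ∀ t, j ≤ t → t ≤ r → f t = f j + (t - j) := by
    intro t ht htr
    induction t, ht using Nat.le_induction with
    | base => simp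
    | succ t htj ih =>
      have h1 : f (t + 1) = f t + 1 :=
        hN t htj (by omega) (by rw [hu (t + 1) (by omega) htr]; exact hβ)
      have h2 := ih (by omega)
      omega
  exact key r (by omega) le_rfl

/-- Existence of the next nonempty position, with interior emptiness and uniform operators. -/
lemma nextP_exists {m : ℕ} {ρ' : ℕ → Finset Atom} {o' : ℕ → TOp}
    (hq' : NormalForm m ρ' o') {j : ℕ} (hj : j < m) :
    ∃ r, j < r ∧ r ≤ m ∧ ρ' r ≠ ∅ ∧ (∀ l, j < l → l < r → ρ' l = ∅) ∧
      (∀ l, j < l → l ≤ r → o' l = o' (j + 1)) := by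
  classical
  have hex : ∃ l, j < l ∧ l ≤ m ∧ ρ' l ≠ ∅ := ⟨m, hj, le_rfl, hq'.1⟩
  set r := Nat.find hex with hrdef
  obtain ⟨hr1, hr2, hr3⟩ := Nat.find_spec hex
  have hint : ∀ l, j < l → l < r → ρ' l = ∅ := by
    intro l hl hlr
    by_contra hne
    exact Nat.find_min hex hlr ⟨hl, by omega, hne⟩
  refine ⟨r, hr1, hr2, hr3, hint, ?_⟩
  have key : ∀ l, j + 1 ≤ l → l ≤ r → o' l = o' (j + 1) := by
    intro l hl hlr
    induction l, hl using Nat.le_induction with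
    | base => rfl
    | succ l hjl ih =>
      have hρ : ρ' l = ∅ := hint l (by omega) (by omega)
      have := hq'.2 l (by omega) (by omega) hρ
      rw [← this]
      exact ih (by omega)
  exact fun l hl hlr => key l (by omega) hlr

-- ### block-unfolding lemmas

section Blocks

variable {n m : ℕ} {ρ ρ' : ℕ → Finset Atom} {o o' : ℕ → TOp} {j r : ℕ}

lemma Wit_base {i : ℕ} : Wit n m ρ ρ' o o' i m ↔ (i ≤ n ∧ ρ' m ⊆ ρ i) := by
  constructor
  · rintro ⟨h, hji, hbd, -, hsub, -⟩
    exact ⟨hji ▸ hbd m le_rfl le_rfl, hji ▸ hsub m le_rfl le_rfl⟩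
  · rintro ⟨hin, hsub⟩
    refine ⟨fun _ => i, rfl, fun l hl hl' => hin, fun l l' hl hll' hl' => by omega, ?_, ?_⟩
    · intro l hl hl'
      have : l = m := by omega
      subst this; exact hsub
    · intro l hl hl'; omega

lemma Wit_fwdE (hr1 : j < r) (hr2 : r ≤ m)
    (hβ : o' (j + 1) = TOp.evtl) {i : ℕ} (hW : Wit n m ρ ρ' o o' i j) :
    i ≤ n ∧ ρ' j ⊆ ρ i ∧ ∃ k, i + (r - j) ≤ k ∧ k ≤ n ∧ Wit n m ρ ρ' o o' k r := by
  obtain ⟨h, hji, hbd, hmono, hsub, hstep⟩ := hW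
  have hjm : j ≤ m := by omega
  refine ⟨hji ▸ hbd j le_rfl hjm, hji ▸ hsub j le_rfl hjm, h r, ?_, hbd r (by omega) hr2, ?_⟩
  · have := mono_gap hmono j r le_rfl (by omega) hr2
    omega
  · exact ⟨h, rfl, fun l hl hl' => hbd l (by omega) hl',
      fun l l' hl hll' hl' => hmono l l' (by omega) hll' hl',
      fun l hl hl' => hsub l (by omega) hl',
      fun l hl hl' => hstep l (by omega) hl'⟩

lemma Wit_fwdN (hr1 : j < r) (hr2 : r ≤ m)
    (hu : ∀ l, j < l → l ≤ r → o' l = o' (j + 1))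
    (hβ : o' (j + 1) = TOp.next) {i : ℕ} (hW : Wit n m ρ ρ' o o' i j) :
    i ≤ n ∧ ρ' j ⊆ ρ i ∧ i + (r - j) ≤ n ∧
      (∀ p, i < p → p ≤ i + (r - j) → o p = TOp.next) ∧
      Wit n m ρ ρ' o o' (i + (r - j)) r := by
  obtain ⟨h, hji, hbd, hmono, hsub, hstep⟩ := hW
  have hjm : j ≤ m := by omega
  have key : ∀ t, j ≤ t → t ≤ r → h t = i + (t - j) ∧ (j < t → o (h t) = TOp.next) := by
    intro t ht htr
    induction t, ht using Nat.le_induction with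
    | base => exact ⟨by simp [hji], by omega⟩
    | succ t htj ih =>
      obtain ⟨ih1, -⟩ := ih (by omega)
      have hstep' := hstep t htj (by omega) (by rw [hu (t + 1) (by omega) htr]; exact hβ)
      exact ⟨by have := hstep'.2; omega, fun _ => hstep'.1⟩
  have hr' : h r = i + (r - j) := (key r (by omega) le_rfl).1
  refine ⟨hji ▸ hbd j le_rfl hjm, hji ▸ hsub j le_rfl hjm, hr' ▸ hbd r (by omega) hr2, ?_, ?_⟩
  · intro p hp hp'
    have hkey := key (j + (p - i)) (by omega) (by omega)
    have heq : h (j + (p - i)) = p := by omega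
    rw [← heq]
    exact hkey.2 (by omega)
  · exact ⟨h, hr', fun l hl hl' => hbd l (by omega) hl',
      fun l l' hl hll' hl' => hmono l l' (by omega) hll' hl',
      fun l hl hl' => hsub l (by omega) hl',
      fun l hl hl' => hstep l (by omega) hl'⟩

lemma Wit_bwd_interp (hr1 : j < r) (hr2 : r ≤ m)
    (hint : ∀ l, j < l → l < r → ρ' l = ∅) {i k : ℕ}
    (hin : i ≤ n) (hsubj : ρ' j ⊆ ρ i) (hik : i + (r - j) ≤ k)
    (hW : Wit n m ρ ρ' o o' k r)
    (hsteps : ∀ l, j ≤ l → l < m → l < r → o' (l + 1) = TOp.next →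
      o (if l + 1 < r then i + (l + 1 - j) else k) = TOp.next ∧
      (if l + 1 < r then i + (l + 1 - j) else k) = i + (l - j) + 1) :
    Wit n m ρ ρ' o o' i j := by
  obtain ⟨h', hr', hbd', hmono', hsub', hstep'⟩ := hW
  have hkn : k ≤ n := hr' ▸ hbd' r le_rfl hr2
  refine ⟨fun l => if l < r then i + (l - j) else h' l, by simp [hr1], ?_, ?_, ?_, ?_⟩
  · intro l hl hl'
    by_cases hlr : l < r
    · simp only [if_pos hlr]; omega
    · simp only [if_neg hlr]; exact hbd' l (by omega) hl'
  · intro l l' hl hll' hl'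
    by_cases hlr : l < r <;> by_cases hl'r : l' < r
    · simp only [if_pos hlr, if_pos hl'r]; omega
    · simp only [if_pos hlr, if_neg hl'r]
      have h1 : h' r ≤ h' l' := by
        rcases eq_or_lt_of_le (show r ≤ l' by omega) with heq | hlt
        · rw [heq]
        · exact le_of_lt (hmono' r l' le_rfl hlt hl')
      rw [hr'] at h1
      omega
    · omega
    · simp only [if_neg hlr, if_neg hl'r]
      exact hmono' l l' (by omega) hll' hl'
  · intro l hl hl'
    by_cases hlr : l < r
    · simp only [if_pos hlr]
      rcases eq_or_lt_of_le hl with rfl | hlt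
      · exact fun x hx => by simpa using hsubj hx
      · simp [hint l hlt hlr]
    · simp only [if_neg hlr]
      exact hsub' l (by omega) hl'
  · intro l hl hl' hnext
    by_cases hlr : l < r
    · have hst := hsteps l hl hl' hlr hnext
      by_cases hl1r : l + 1 < r
      · simp only [if_pos hlr, if_pos hl1r] at hst ⊢
        exact hst
      · have hl1 : l + 1 = r := by omega
        simp only [if_pos hlr, if_neg hl1r] at hst ⊢
        rw [hl1, hr']
        exact hst
    · have hl1r : ¬ (l + 1 < r) := by omega
      simp only [if_neg hlr, if_neg hl1r]
      exact hstep' l (by omega) hl' hnext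

lemma Wit_bwdE (hr1 : j < r) (hr2 : r ≤ m)
    (hint : ∀ l, j < l → l < r → ρ' l = ∅)
    (hu : ∀ l, j < l → l ≤ r → o' l = o' (j + 1))
    (hβ : o' (j + 1) = TOp.evtl) {i k : ℕ}
    (hin : i ≤ n) (hsubj : ρ' j ⊆ ρ i) (hik : i + (r - j) ≤ k)
    (hW : Wit n m ρ ρ' o o' k r) : Wit n m ρ ρ' o o' i j := by
  refine Wit_bwd_interp hr1 hr2 hint hin hsubj hik hW ?_
  intro l hl hl' hlr hnext
  exfalso
  have := hu (l + 1) (by omega) (by omega)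
  rw [hnext, hβ] at this
  exact TOp.noConfusion this

lemma Wit_bwdN (hr1 : j < r) (hr2 : r ≤ m)
    (hint : ∀ l, j < l → l < r → ρ' l = ∅) {i : ℕ}
    (hin : i ≤ n) (hsubj : ρ' j ⊆ ρ i) (hroom : i + (r - j) ≤ n)
    (hwin : ∀ p, i < p → p ≤ i + (r - j) → o p = TOp.next)
    (hW : Wit n m ρ ρ' o o' (i + (r - j)) r) : Wit n m ρ ρ' o o' i j := by
  refine Wit_bwd_interp hr1 hr2 hint hin hsubj le_rfl hW ?_
  intro l hl hl' hlr hnext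
  by_cases hl1r : l + 1 < r
  · simp only [if_pos hl1r]
    exact ⟨hwin _ (by omega) (by omega), by omega⟩
  · have hl1 : l + 1 = r := by omega
    simp only [if_neg hl1r]
    exact ⟨hwin _ (by omega) (by omega), by omega⟩

lemma EMB_fwdE {B : Finset ℕ} (hr1 : j < r) (hr2 : r ≤ m) (hne : ρ' r ≠ ∅)
    {κ : ℕ} (hE : EMB n m ρ ρ' o' B κ j) :
    ρ' j ⊆ ρ κ ∧ ∃ k, k ≤ n ∧ tau m B κ + (r - j) ≤ tau m B k ∧ EMB n m ρ ρ' o' B k r := by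
  obtain ⟨f, hf, hsub, hmono, hstep, hanch⟩ := hE
  obtain ⟨k, hkn, hka, hksub⟩ := hanch r hr1 hr2 hne
  refine ⟨hsub, k, hkn, ?_, ?_⟩
  · have := mono_gap hmono j r le_rfl (by omega) hr2
    omega
  · exact ⟨f, hka.symm, hksub, fun l l' hl hll' hl' => hmono l l' (by omega) hll' hl',
      fun l hl hl' => hstep l (by omega) hl',
      fun l hl hl' => hanch l (by omega) hl'⟩

lemma EMB_fwdN {B : Finset ℕ} (hr1 : j < r) (hr2 : r ≤ m) (hne : ρ' r ≠ ∅)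
    (hu : ∀ l, j < l → l ≤ r → o' l = o' (j + 1)) (hβ : o' (j + 1) = TOp.next)
    {κ : ℕ} (hE : EMB n m ρ ρ' o' B κ j) :
    ρ' j ⊆ ρ κ ∧ ∃ k, k ≤ n ∧ tau m B k = tau m B κ + (r - j) ∧ EMB n m ρ ρ' o' B k r := by
  obtain ⟨f, hf, hsub, hmono, hstep, hanch⟩ := hE
  obtain ⟨k, hkn, hka, hksub⟩ := hanch r hr1 hr2 hne
  have hchain : f r = f j + (r - j) := chain_exact hr2 hr1 hstep hu hβ
  refine ⟨hsub, k, hkn, by omega, ?_⟩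
  exact ⟨f, hka.symm, hksub, fun l l' hl hll' hl' => hmono l l' (by omega) hll' hl',
    fun l hl hl' => hstep l (by omega) hl',
    fun l hl hl' => hanch l (by omega) hl'⟩

end Blocks

-- ### the recursive barrier construction

section REC

variable {n m : ℕ} {ρ ρ' : ℕ → Finset Atom} {o o' : ℕ → TOp}

lemma REC_base {z : ℕ} :
    ∃ B : Finset ℕ, (∀ b ∈ B, z < b ∧ b ≤ n ∧ o b = TOp.evtl) ∧
      ∀ B₀ : Finset ℕ, (∀ b ∈ B₀, o b = TOp.evtl) →
        (∀ b ∈ B₀, b ≤ z ∨ ∃ y, b ≤ y ∧ Wit n m ρ ρ' o o' y m) →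
        ∀ κ, z ≤ κ → κ ≤ n → ¬Wit n m ρ ρ' o o' κ m →
          ¬EMB n m ρ ρ' o' (B ∪ B₀) κ m := by
  refine ⟨∅, by simp, ?_⟩
  intro B₀ hE hH κ hzκ hκn hκW hEMB
  obtain ⟨f, -, hsub, -, -, -⟩ := hEMB
  exact hκW (Wit_base.2 ⟨hκn, hsub⟩)

lemma REC (hq' : NormalForm m ρ' o') :
    ∀ d J, J ≤ m → m - J ≤ d → ∀ z, ∃ B : Finset ℕ,
      (∀ b ∈ B, z < b ∧ b ≤ n ∧ o b = TOp.evtl) ∧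
      ∀ B₀ : Finset ℕ, (∀ b ∈ B₀, o b = TOp.evtl) →
        (∀ b ∈ B₀, b ≤ z ∨ ∃ y, b ≤ y ∧ Wit n m ρ ρ' o o' y J) →
        ∀ κ, z ≤ κ → κ ≤ n → ¬Wit n m ρ ρ' o o' κ J →
          ¬EMB n m ρ ρ' o' (B ∪ B₀) κ J := by
  intro d
  induction d with
  | zero =>
    intro J hJm hd z
    have : J = m := by omega
    subst this
    exact REC_base
  | succ d ih =>
    intro J hJm hd z
    by_cases hJ : J = m
    · subst hJ
      exact REC_base
    · have hJm' : J < m := lt_of_le_of_ne hJm hJ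
      obtain ⟨r, hr1, hr2, hne, hint, hu⟩ := nextP_exists hq' hJm'
      have hrd : m - r ≤ d := by omega
      have hL1 : 1 ≤ r - J := by omega
      have hLm : r - J ≤ m := by omega
      classical
      cases hβ : o' (J + 1) with
      | evtl =>
        set S := (Finset.Icc z n).filter
          (fun k => ¬Wit n m ρ ρ' o o' k J ∧ ρ' J ⊆ ρ k) with hSdef
        by_cases hS : S.Nonempty
        · -- main evtl case
          have hq₁S := S.min'_mem hS
          set q₁ := S.min' hS with hq₁def
          obtain ⟨hIcc₁, hq₁W, hq₁live⟩ := Finset.mem_filter.1 hq₁S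
          obtain ⟨hzq₁, hq₁n⟩ := Finset.mem_Icc.1 hIcc₁
          have hval : ∀ k, q₁ + (r - J) ≤ k → k ≤ n → ¬Wit n m ρ ρ' o o' k r := by
            intro k hk hkn hW
            exact hq₁W (Wit_bwdE hr1 hr2 hint hu hβ hq₁n hq₁live hk hW)
          obtain ⟨Bc, hBcPos, hBcKill⟩ := ih r hr2 hrd (q₁ + (r - J))
          have harmless : ∀ B₀ : Finset ℕ,
              (∀ b ∈ B₀, b ≤ z ∨ ∃ y, b ≤ y ∧ Wit n m ρ ρ' o o' y J) →
              (∀ b ∈ B₀, b ≤ q₁ + (r - J) ∨ ∃ y, b ≤ y ∧ Wit n m ρ ρ' o o' y r) := by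
            intro B₀ hB₀h b hb
            rcases hB₀h b hb with h | ⟨y, hby, hWy⟩
            · left; omega
            · obtain ⟨-, -, ky, hky1, hky2, hWky⟩ := Wit_fwdE hr1 hr2 hβ hWy
              exact Or.inr ⟨ky, by omega, hWky⟩
          refine ⟨Bc, ?_, ?_⟩
          · intro b hb
            obtain ⟨h1, h2, h3⟩ := hBcPos b hb
            exact ⟨by omega, h2, h3⟩
          · intro B₀ hB₀E hB₀h κ hzκ hκn hκW hEMB
            obtain ⟨hsub, k, hkn, hτ, hEk⟩ := EMB_fwdE hr1 hr2 hne hEMB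
            have hκS : κ ∈ S :=
              Finset.mem_filter.2 ⟨Finset.mem_Icc.2 ⟨hzκ, hκn⟩, hκW, hsub⟩
            have hκq₁ : q₁ ≤ κ := S.min'_le κ hκS
            have hκk : κ < k := by
              by_contra h
              have := tau_mono (m := m) (B := Bc ∪ B₀) (show k ≤ κ by omega)
              omega
            by_cases hbar : ∃ p, p ∈ Bc ∪ B₀ ∧ κ < p ∧ p ≤ k
            · obtain ⟨p, hpB, hκp, hpk⟩ := hbar
              rcases Finset.mem_union.1 hpB with hpc | hp0
              · have hpq := (hBcPos p hpc).1
                have hkge : q₁ + (r - J) ≤ k := by omega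
                exact hBcKill B₀ hB₀E (harmless B₀ hB₀h) k hkge hkn (hval k hkge hkn) hEk
              · rcases hB₀h p hp0 with hpz | ⟨y, hpy, hWy⟩
                · omega
                · obtain ⟨-, -, ky, hky1, hky2, hWky⟩ := Wit_fwdE hr1 hr2 hβ hWy
                  exact hval ky (by omega) hky2 hWky
            · push_neg at hbar
              have hnoB : ∀ p, κ < p → p ≤ k → p ∉ Bc ∪ B₀ := by
                intro p hp hp' hmem
                have := hbar p hmem hp
                omega
              have htn := tau_noB (m := m) (le_of_lt hκk) hnoB
              have hkge : q₁ + (r - J) ≤ k := by omega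
              exact hBcKill B₀ hB₀E (harmless B₀ hB₀h) k hkge hkn (hval k hkge hkn) hEk
        · -- no live obligations
          refine ⟨∅, by simp, ?_⟩
          intro B₀ hB₀E hB₀h κ hzκ hκn hκW hEMB
          obtain ⟨f, -, hsub, -, -, -⟩ := hEMB
          exact hS ⟨κ, Finset.mem_filter.2 ⟨Finset.mem_Icc.2 ⟨hzκ, hκn⟩, hκW, hsub⟩⟩
      | next =>
        set ownB := (Finset.Icc (z + 1) n).filter
          (fun p => o p = TOp.evtl ∧ ∃ κ', z ≤ κ' ∧ κ' < p ∧ p ≤ κ' + (r - J) ∧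
            κ' + (r - J) ≤ n ∧ ¬Wit n m ρ ρ' o o' κ' J ∧ ρ' J ⊆ ρ κ' ∧
            Wit n m ρ ρ' o o' (κ' + (r - J)) r) with hownDef
        obtain ⟨Bc, hBcPos, hBcKill⟩ := ih r hr2 hrd (z + (r - J))
        refine ⟨Bc ∪ ownB, ?_, ?_⟩
        · intro b hb
          rcases Finset.mem_union.1 hb with h | h
          · obtain ⟨h1, h2, h3⟩ := hBcPos b h
            exact ⟨by omega, h2, h3⟩
          · obtain ⟨hIcc, hpred⟩ := Finset.mem_filter.1 h
            obtain ⟨h1, h2⟩ := Finset.mem_Icc.1 hIcc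
            exact ⟨by omega, h2, hpred.1⟩
        · intro B₀ hB₀E hB₀h κ hzκ hκn hκW hEMB
          rw [Finset.union_assoc] at hEMB
          obtain ⟨hsub, k, hkn, hτ, hEk⟩ := EMB_fwdN hr1 hr2 hne hu hβ hEMB
          have hκk : κ < k := by
            by_contra h
            have := tau_mono (m := m) (B := Bc ∪ (ownB ∪ B₀)) (show k ≤ κ by omega)
            omega
          have hnoB : ∀ p, κ < p → p ≤ k → p ∉ Bc ∪ (ownB ∪ B₀) := by
            intro p hp hp' hmem
            have := tau_cross (m := m) (B := Bc ∪ (ownB ∪ B₀)) hp hp' hmem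
            omega
          have hkeq : k = κ + (r - J) := by
            have := tau_noB (m := m) (le_of_lt hκk) hnoB
            omega
          subst hkeq
          by_cases hw : Wit n m ρ ρ' o o' (κ + (r - J)) r
          · have hops : ¬ (∀ p, κ < p → p ≤ κ + (r - J) → o p = TOp.next) := by
              intro hall
              exact hκW (Wit_bwdN hr1 hr2 hint hκn hsub hkn hall hw)
            push_neg at hops
            obtain ⟨p, hp1, hp2, hpN⟩ := hops
            have hpE : o p = TOp.evtl := by
              cases hop : o p
              · exact absurd hop hpN
              · rfl
            have hpown : p ∈ ownB :=
              Finset.mem_filter.2 ⟨Finset.mem_Icc.2 ⟨by omega, by omega⟩,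
                hpE, κ, hzκ, hp1, hp2, hkn, hκW, hsub, hw⟩
            exact hnoB p hp1 (by omega)
              (Finset.mem_union.2 (Or.inr (Finset.mem_union.2 (Or.inl hpown))))
          · refine hBcKill (ownB ∪ B₀) ?_ ?_ (κ + (r - J)) (by omega) hkn hw hEk
            · intro b hb
              rcases Finset.mem_union.1 hb with h | h
              · exact (Finset.mem_filter.1 h).2.1
              · exact hB₀E b h
            · intro b hb
              rcases Finset.mem_union.1 hb with h | h
              · obtain ⟨-, -, κ', -, -, hbκ', -, -, -, hWκ'⟩ := Finset.mem_filter.1 h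
                exact Or.inr ⟨κ' + (r - J), hbκ', hWκ'⟩
              · rcases hB₀h b h with hbz | ⟨y, hby, hWy⟩
                · left; omega
                · obtain ⟨-, -, -, -, hWyr⟩ := Wit_fwdN hr1 hr2 hu hβ hWy
                  exact Or.inr ⟨y + (r - J), by omega, hWyr⟩

end REC

-- ### canonical instance lemmas and assembly

lemma mono_of_adj {f : ℕ → ℕ} {M' : ℕ} (h : ∀ l, l < M' → f l < f (l + 1)) :
    ∀ l l', l < l' → l' ≤ M' → f l < f l' := by
  intro l l' hll' hl'
  induction l', hll' using Nat.le_induction with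
  | base => exact h l (by omega)
  | succ l' hll' ih =>
    have := h l' (by omega)
    have := ih (by omega)
    omega

section Canon

variable {n m : ℕ} {ρ ρ' : ℕ → Finset Atom} {o o' : ℕ → TOp} {B : Finset ℕ}

lemma satDB_q (hBE : ∀ b ∈ B, o b = TOp.evtl) :
    Query.sat (DBI n m ρ B) (pathQ n ρ o) 0 := by
  rw [pathQ, sat_pathFrom]
  refine ⟨tau m B, rfl, ?_, ?_⟩
  · intro l hl hl' a ha
    exact mem_DBI.2 ⟨l, by omega, ha, rfl⟩
  · intro l hl hl'
    constructor
    · exact tau_strictMono (by omega)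
    · intro hnext
      rw [tau_succ]
      have : l + 1 ∉ B := by
        intro hmem
        rw [hBE _ hmem] at hnext
        exact TOp.noConfusion hnext
      rw [if_neg this]

lemma satDB_q'_toEMB (h : Query.sat (DBI n m ρ B) (pathQ m ρ' o') 0) :
    EMB n m ρ ρ' o' B 0 0 := by
  rw [pathQ, sat_pathFrom] at h
  obtain ⟨f, hf0, hfacts, hsteps⟩ := h
  have hanch : ∀ l, l ≤ m → ρ' l ≠ ∅ → ∃ k, k ≤ n ∧ tau m B k = f l ∧ ρ' l ⊆ ρ k := by
    intro l hl hne
    obtain ⟨a, ha⟩ := Finset.nonempty_iff_ne_empty.2 hne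
    obtain ⟨k, hk, hak, hfl⟩ := mem_DBI.1 (hfacts l (by omega) (by omega) a ha)
    refine ⟨k, hk, hfl.symm, ?_⟩
    intro a' ha'
    obtain ⟨k', hk', hak', hfl'⟩ := mem_DBI.1 (hfacts l (by omega) (by omega) a' ha')
    have : k' = k := tau_inj (m := m) (B := B) (show tau m B k' = tau m B k by omega)
    exact this ▸ hak'
  refine ⟨f, by rw [hf0]; rfl, ?_, ?_, ?_, fun l _ hl' => hanch l hl'⟩
  · intro a ha
    obtain ⟨k, hk, hfk, hsub⟩ := hanch 0 (by omega)
      (by intro hc; rw [hc] at ha; exact absurd ha (Finset.notMem_empty a))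
    have : k = 0 := tau_inj (m := m) (B := B) (by rw [hfk, hf0]; rfl)
    exact this ▸ hsub ha
  · intro l l' hl hll' hl'
    exact mono_of_adj (fun t ht => (hsteps t (by omega) (by omega)).1) l l' hll' hl'
  · intro l hl hl' hnext
    exact (hsteps l (by omega) (by omega)).2 hnext

end Canon

lemma Wit_to_Entails {n m : ℕ} {ρ ρ' : ℕ → Finset Atom} {o o' : ℕ → TOp}
    (hW : Wit n m ρ ρ' o o' 0 0) : Entails (pathQ n ρ o) (pathQ m ρ' o') := by
  intro D hDne hsat
  rw [pathQ, sat_pathFrom] at hsat ⊢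
  obtain ⟨f, hf0, hfacts, hsteps⟩ := hsat
  obtain ⟨h, h00, hbd, hmono, hsub, hstep⟩ := hW
  have hfm : ∀ l l', l < l' → l' ≤ n → f l < f l' :=
    mono_of_adj (fun t ht => (hsteps t (by omega) (by omega)).1)
  refine ⟨fun l => f (h l), by show f (h 0) = 0; rw [h00, hf0], ?_, ?_⟩
  · intro l hl hl' a ha
    exact hfacts (h l) (by omega) (by simpa using hbd l (by omega) (by omega)) a
      (hsub l (by omega) (by omega) ha)
  · intro l hl hl'
    have hbl := hbd l (by omega) (by omega)
    have hbl1 := hbd (l + 1) (by omega) (by omega)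
    have hml := hmono l (l + 1) (by omega) (by omega) (by omega)
    constructor
    · exact hfm (h l) (h (l + 1)) hml (by simpa using hbl1)
    · intro hnext
      obtain ⟨hoN, hexact⟩ := hstep l (by omega) (by omega) hnext
      have hq := hsteps (h l) (by omega) (by omega)
      show f (h (l + 1)) = f (h l) + 1
      rw [hexact]
      rw [hexact] at hoN
      exact hq.2 hoN

theorem statement_1' (n m : ℕ) (ρ ρ' : ℕ → Finset Atom) (o o' : ℕ → TOp)
    (hq : NormalForm n ρ o) (hq' : NormalForm m ρ' o') :
    Entails (pathQ n ρ o) (pathQ m ρ' o') ↔ Wit n m ρ ρ' o o' 0 0 := by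
  constructor
  · intro hE
    by_contra hnW
    obtain ⟨B, hBpos, hBkill⟩ := REC hq' m 0 (by omega) (by omega) 0
    have hkill := hBkill ∅ (fun b hb => absurd hb (Finset.notMem_empty b))
      (fun b hb => absurd hb (Finset.notMem_empty b)) 0 le_rfl (by omega) hnW
    have hBE : ∀ b ∈ B ∪ (∅ : Finset ℕ), o b = TOp.evtl := by
      intro b hb
      rcases Finset.mem_union.1 hb with h | h
      · exact (hBpos b h).2.2
      · exact absurd h (Finset.notMem_empty b)
    have hne : (DBI n m ρ (B ∪ ∅)).Nonempty := by
      obtain ⟨a, ha⟩ := Finset.nonempty_iff_ne_empty.2 hq.1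
      exact ⟨(a, tau m (B ∪ ∅) n), mem_DBI.2 ⟨n, le_rfl, ha, rfl⟩⟩
    exact hkill (satDB_q'_toEMB (hE _ hne (satDB_q hBE)))
  · exact Wit_to_Entails


/-- Containment of path ○◇-queries in normal form is characterised by
the existence of a containment witness. -/
theorem statement_1 (n m : ℕ) (ρ ρ' : ℕ → Finset Atom) (o o' : ℕ → TOp)
    (hq : NormalForm n ρ o) (hq' : NormalForm m ρ' o') :
    Entails (pathQ n ρ o) (pathQ m ρ' o') ↔
      ∃ h : ℕ → ℕ,
        (∀ i ≤ m, h i ≤ n) ∧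
        (∀ i j, i < j → j ≤ m → h i < h j) ∧
        h 0 = 0 ∧
        (∀ i ≤ m, ρ' i ⊆ ρ (h i)) ∧
        ∀ i < m, o' (i + 1) = TOp.next → o (h (i + 1)) = TOp.next ∧ h (i + 1) = h i + 1 := by
  rw [statement_1' n m ρ ρ' o o' hq hq']
  unfold Wit
  constructor
  · rintro ⟨h, h00, hbd, hmono, hsub, hstep⟩
    exact ⟨h, fun i hi => hbd i (by omega) hi, fun i j hij hj => hmono i j (by omega) hij hj,
      h00, fun i hi => hsub i (by omega) hi, fun i hi => hstep i (by omega) hi⟩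
  · rintro ⟨h, hbd, hmono, h00, hsub, hstep⟩
    exact ⟨h, h00, fun l _ hl => hbd l hl, fun l l' _ hll' hl' => hmono l l' hll' hl',
      fun l _ hl => hsub l hl, fun l _ hl hnext => hstep l hl hnext⟩
end

section
/- Let a, b be two distinct atoms and set q₁ = ◇(a ∧ ○((a ∧ b) ∧ ○a)), q₂ = ◇(b ∧ ○((a ∧ b) ∧ ○b)), q₃ = ◇(a ∧ ○((a ∧ b) ∧ ○b)), q₄ = ◇(a ∧ ◇(b ∧ ◇(a ∧ ◇(b ∧ ◇(a ∧ ◇b))))), and q′ = ◇(b ∧ ◇((a ∧ b) ∧ ◇a)). Then q₁ ∧ q₂ ∧ q₃ ∧ q₄ ⊨ q′, but qᵢ ⊭ q′ for every i ∈ {1,2,3,4}. -/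
/-- q₁ = ◇(a ∧ ○((a ∧ b) ∧ ○a)) -/
def exq₁ (a b : Atom) : Query :=
  .evtl (.and (.atom a) (.next (.and (.and (.atom a) (.atom b)) (.next (.atom a)))))

/-- q₂ = ◇(b ∧ ○((a ∧ b) ∧ ○b)) -/
def exq₂ (a b : Atom) : Query :=
  .evtl (.and (.atom b) (.next (.and (.and (.atom a) (.atom b)) (.next (.atom b)))))

/-- q₃ = ◇(a ∧ ○((a ∧ b) ∧ ○b)) -/
def exq₃ (a b : Atom) : Query :=
  .evtl (.and (.atom a) (.next (.and (.and (.atom a) (.atom b)) (.next (.atom b)))))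

/-- q₄ = ◇(a ∧ ◇(b ∧ ◇(a ∧ ◇(b ∧ ◇(a ∧ ◇b))))) -/
def exq₄ (a b : Atom) : Query :=
  .evtl (.and (.atom a)
    (.evtl (.and (.atom b)
      (.evtl (.and (.atom a)
        (.evtl (.and (.atom b)
          (.evtl (.and (.atom a) (.evtl (.atom b)))))))))))

/-- q′ = ◇(b ∧ ◇((a ∧ b) ∧ ◇a)) -/
def exq' (a b : Atom) : Query :=
  .evtl (.and (.atom b) (.evtl (.and (.and (.atom a) (.atom b)) (.evtl (.atom a)))))

/-- q₁ ∧ q₂ ∧ q₃ ∧ q₄ ⊨ q′ but no single qᵢ entails q′. -/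
theorem statement_3 (a b : Atom) (hab : a ≠ b) :
    Entails (Query.and (exq₁ a b) (Query.and (exq₂ a b) (Query.and (exq₃ a b) (exq₄ a b))))
      (exq' a b) ∧
    ¬ Entails (exq₁ a b) (exq' a b) ∧
    ¬ Entails (exq₂ a b) (exq' a b) ∧
    ¬ Entails (exq₃ a b) (exq' a b) ∧
    ¬ Entails (exq₄ a b) (exq' a b) := by
  constructor
  · -- the positive entailment
    intro D _ hq
    simp only [exq₁, exq₂, exq₃, exq₄, exq', Query.sat] at hq ⊢
    obtain ⟨⟨m, hm, ham, ⟨ham1, hbm1⟩, ham2⟩,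
      ⟨n, hn, hbn, ⟨han1, hbn1⟩, hbn2⟩,
      ⟨p, hp, hap, ⟨hap1, hbp1⟩, hbp2⟩,
      t1, ht1, hat1, t2, ht12, hbt2, t3, ht23, hat3,
      t4, ht34, hbt4, t5, ht45, hat5, t6, ht56, hbt6⟩ := hq
    by_contra H
    push_neg at H
    have step1 : ∀ i, 0 < i → (b, i) ∈ D → m + 1 ≤ i := by
      intro i h0 hb
      by_contra hlt
      push_neg at hlt
      exact H i h0 hb (m+1) (by omega) ⟨ham1, hbm1⟩ (m+2) (by omega) ham2
    have step2 : ∀ k, n + 1 < k → (a, k) ∉ D :=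
      fun k hk => H n hn hbn (n+1) (by omega) ⟨han1, hbn1⟩ k hk
    have hpn : p + 1 ≤ n + 1 := by
      by_contra h
      push_neg at h
      exact step2 (p+1) h hap1
    by_cases hcase : p + 1 < n + 1
    · have hnob : ∀ i, 0 < i → (b, i) ∈ D → p + 1 ≤ i := by
        intro i h0 hb
        by_contra hlt
        push_neg at hlt
        exact H i h0 hb (p+1) (by omega) ⟨hap1, hbp1⟩ (n+1) (by omega) han1
      have h1 : m + 1 ≤ p + 1 := step1 (p+1) (by omega) hbp1
      have h2 : p + 1 ≤ m + 1 := hnob (m+1) (by omega) hbm1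
      have hmp : m = p := by omega
      have hb2 : (b, m+2) ∈ D := by rw [hmp]; exact hbp2
      have noA : ∀ k, m + 2 < k → (a, k) ∉ D :=
        fun k hk => H (m+1) (by omega) hbm1 (m+2) (by omega) ⟨ham2, hb2⟩ k hk
      have ht5 : t5 ≤ m + 2 := by
        by_contra h
        push_neg at h
        exact noA t5 (by omega) hat5
      have ht2 : m + 1 ≤ t2 := step1 t2 (by omega) hbt2
      omega
    · have hpn' : p = n := by omega
      subst hpn'
      by_cases hmn : m + 1 < p
      · exact H (m+1) (by omega) hbm1 p (by omega) ⟨hap, hbn⟩ (p+1) (by omega) han1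
      · have h1 : m + 1 ≤ p := step1 p (by omega) hbn
        have noA : ∀ k, p + 1 < k → (a, k) ∉ D :=
          fun k hk => H p (by omega) hbn (p+1) (by omega) ⟨han1, hbn1⟩ k hk
        have ht5 : t5 ≤ p + 1 := by
          by_contra h
          push_neg at h
          exact noA t5 (by omega) hat5
        have ht2 : m + 1 ≤ t2 := step1 t2 (by omega) hbt2
        omega
  refine ⟨?_, ?_, ?_, ?_⟩
  · -- q₁ does not entail q'
    intro h
    have hq' := h ({(a,1),(a,2),(b,2),(a,3)} : Finset (Atom × ℕ)) ⟨(a,1), by simp⟩ ?_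
    · simp only [exq', Query.sat] at hq'
      obtain ⟨i, hi, hbi, j, hij, ⟨haj, hbj⟩, k, hjk, hak⟩ := hq'
      simp only [Finset.mem_insert, Finset.mem_singleton, Prod.mk.injEq] at hbi hbj
      simp [hab.symm] at hbi hbj
      omega
    · simp only [exq₁, Query.sat]
      exact ⟨1, by norm_num, by simp, ⟨by simp, by simp⟩, by simp⟩
  · -- q₂ does not entail q'
    intro h
    have hq' := h ({(b,1),(a,2),(b,2),(b,3)} : Finset (Atom × ℕ)) ⟨(b,1), by simp⟩ ?_
    · simp only [exq', Query.sat] at hq'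
      obtain ⟨i, hi, hbi, j, hij, ⟨haj, hbj⟩, k, hjk, hak⟩ := hq'
      simp only [Finset.mem_insert, Finset.mem_singleton, Prod.mk.injEq] at haj hak
      simp [hab] at haj hak
      omega
    · simp only [exq₂, Query.sat]
      exact ⟨1, by norm_num, by simp, ⟨by simp, by simp⟩, by simp⟩
  · -- q₃ does not entail q'
    intro h
    have hq' := h ({(a,1),(a,2),(b,2),(b,3)} : Finset (Atom × ℕ)) ⟨(a,1), by simp⟩ ?_
    · simp only [exq', Query.sat] at hq'
      obtain ⟨i, hi, hbi, j, hij, ⟨haj, hbj⟩, k, hjk, hak⟩ := hq'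
      simp only [Finset.mem_insert, Finset.mem_singleton, Prod.mk.injEq] at haj hbj hak
      simp [hab, hab.symm] at haj hbj hak
      omega
    · simp only [exq₃, Query.sat]
      exact ⟨1, by norm_num, by simp, ⟨by simp, by simp⟩, by simp⟩
  · -- q₄ does not entail q'
    intro h
    have hq' := h ({(a,1),(b,2),(a,3),(b,4),(a,5),(b,6)} : Finset (Atom × ℕ)) ⟨(a,1), by simp⟩ ?_
    · simp only [exq', Query.sat] at hq'
      obtain ⟨i, hi, hbi, j, hij, ⟨haj, hbj⟩, k, hjk, hak⟩ := hq'
      simp only [Finset.mem_insert, Finset.mem_singleton, Prod.mk.injEq] at haj hbj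
      simp [hab, hab.symm] at haj hbj
      omega
    · simp only [exq₄, Query.sat]
      exact ⟨1, by norm_num, by simp, 2, by norm_num, by simp, 3, by norm_num, by simp,
        4, by norm_num, by simp, 5, by norm_num, by simp, 6, by norm_num, by simp⟩
end

section
/- Let σ = {A} be the signature consisting of a single atom A. For every n > 0, every strengthening frontier F for ◇A in 𝒬_in^σ contains a query equivalent to ◇(A ∧ ○ⁿ A). Consequently, every strengthening frontier for ◇A in 𝒬_in^σ is infinite (contains infinitely many pairwise non-equivalent queries). -/
/-- `F` is a strengthening frontier for `q` in the class `Q`. -/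
def StrengtheningFrontier (Q : Set Query) (q : Query) (F : Set Query) : Prop :=
  F ⊆ Q ∧
  (∀ q' ∈ F, Entails q' q ∧ ¬ QEquiv q' q) ∧
  ∀ q'' ∈ Q, Entails q'' q → ¬ QEquiv q'' q → ∃ q' ∈ F, Entails q'' q'

/-- `F` is a weakening frontier for `q` in the class `Q`. -/
def WeakeningFrontier (Q : Set Query) (q : Query) (F : Set Query) : Prop :=
  F ⊆ Q ∧
  (∀ q' ∈ F, Entails q q' ∧ ¬ QEquiv q' q) ∧
  ∀ q'' ∈ Q, Entails q q'' → ¬ QEquiv q'' q → ∃ q' ∈ F, Entails q' q''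

/-- `𝒬_p^σ[○◇]`: path ○◇-queries over the signature `σ`. -/
def QpSig (σ : Finset Atom) : Set Query :=
  {q | ∃ (n : ℕ) (ρ : ℕ → Finset Atom) (o : ℕ → TOp),
        (∀ i ≤ n, ρ i ⊆ σ) ∧ q = pathQ n ρ o}

/-- `𝒬_p^σ[◇]`: path ◇-queries over the signature `σ`. -/
def QpdSig (σ : Finset Atom) : Set Query :=
  {q | ∃ (n : ℕ) (ρ : ℕ → Finset Atom),
        (∀ i ≤ n, ρ i ⊆ σ) ∧ q = pathQ n ρ fun _ => TOp.evtl}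

/-- Operators of an interval query: `o₁ = ◇`, `oᵢ = ○` for `i > 1`. -/
def intervalOps : ℕ → TOp := fun i => if i ≤ 1 then TOp.evtl else TOp.next

/-- `𝒬_in^σ`: interval queries over the signature `σ`. -/
def QinSig (σ : Finset Atom) : Set Query :=
  {q | ∃ (n : ℕ) (ρ : ℕ → Finset Atom), 1 ≤ n ∧ ρ 0 = ∅ ∧ ρ 1 ≠ ∅ ∧
        (∀ i ≤ n, ρ i ⊆ σ) ∧ q = pathQ n ρ intervalOps}

/-- `○ⁿ q`. -/
def nextIter : ℕ → Query → Query
  | 0, q => q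
  | k + 1, q => Query.next (nextIter k q)

lemma foldr_conj_sat (D : Inst) (l : List Atom) (m : ℕ) :
    Query.sat D (l.foldr (fun a q => Query.and (Query.atom a) q) Query.top) m ↔
      ∀ a ∈ l, (a, m) ∈ D := by
  induction l with
  | nil => simp [Query.sat]
  | cons a l ih => simp [Query.sat, ih]

lemma conjQ_sat (D : Inst) (ρ : Finset Atom) (m : ℕ) :
    Query.sat D (conjQ ρ) m ↔ ∀ a ∈ ρ, (a, m) ∈ D := by
  rw [conjQ, foldr_conj_sat]
  simp [Finset.mem_toList]

lemma nextIter_sat (D : Inst) (q : Query) (k m : ℕ) :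
    Query.sat D (nextIter k q) m ↔ Query.sat D q (m + k) := by
  induction k generalizing m with
  | zero => simp [nextIter]
  | succ k ih =>
      show Query.sat D (nextIter k q) (m + 1) ↔ _
      rw [ih, show m + 1 + k = m + (k + 1) by omega]

lemma pathFrom_next_sat (D : Inst) (ρ : ℕ → Finset Atom) (k i m : ℕ) (hi : 1 ≤ i) :
    Query.sat D (pathFrom ρ intervalOps i k) m ↔
      ∀ j ≤ k, ∀ a ∈ ρ (i + j), (a, m + j) ∈ D := by
  induction k generalizing i m with
  | zero =>
      rw [pathFrom, conjQ_sat]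
      constructor
      · intro h j hj a ha
        interval_cases j
        simpa using h a (by simpa using ha)
      · intro h a ha
        simpa using h 0 le_rfl a (by simpa using ha)
  | succ k ih =>
      have ho : intervalOps (i + 1) = TOp.next := by
        unfold intervalOps; rw [if_neg (by omega)]
      rw [pathFrom, ho]
      show (Query.sat D (conjQ (ρ i)) m ∧
          Query.sat D (pathFrom ρ intervalOps (i + 1) k) (m + 1)) ↔ _
      rw [conjQ_sat, ih (i + 1) (m + 1) (by omega)]
      constructor
      · rintro ⟨h0, hs⟩ j hj a ha
        rcases Nat.eq_zero_or_pos j with rfl | hjp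
        · simpa using h0 a (by simpa using ha)
        · obtain ⟨j', rfl⟩ := Nat.exists_eq_add_of_le hjp
          rw [show m + (1 + j') = m + 1 + j' by omega]
          exact hs j' (by omega) a (by rwa [show i + 1 + j' = i + (1 + j') by omega])
      · intro h
        constructor
        · intro a ha
          simpa using h 0 (by omega) a (by simpa using ha)
        · intro j hj a ha
          rw [show m + 1 + j = m + (j + 1) by omega]
          exact h (j + 1) (by omega) a (by rwa [show i + (j + 1) = i + 1 + j by omega])

lemma pathQ_interval_sat (D : Inst) (n : ℕ) (ρ : ℕ → Finset Atom)
    (hn : 1 ≤ n) (h0 : ρ 0 = ∅) :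
    Query.sat D (pathQ n ρ intervalOps) 0 ↔
      ∃ m, 0 < m ∧ ∀ j < n, ∀ a ∈ ρ (j + 1), (a, m + j) ∈ D := by
  obtain ⟨k, rfl⟩ : ∃ k, n = k + 1 := ⟨n - 1, by omega⟩
  have ho : intervalOps (0 + 1) = TOp.evtl := rfl
  rw [pathQ, pathFrom, ho]
  show (Query.sat D (conjQ (ρ 0)) 0 ∧
      ∃ m, 0 < m ∧ Query.sat D (pathFrom ρ intervalOps (0 + 1) k) m) ↔ _
  rw [conjQ_sat]
  constructor
  · rintro ⟨-, m, hm, hs⟩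
    rw [pathFrom_next_sat D ρ k (0 + 1) m le_rfl] at hs
    refine ⟨m, hm, fun j hj a ha => ?_⟩
    exact hs j (by omega) a (by rwa [show 0 + 1 + j = j + 1 by omega])
  · rintro ⟨m, hm, hs⟩
    refine ⟨by simp [h0], m, hm, ?_⟩
    rw [pathFrom_next_sat D ρ k (0 + 1) m le_rfl]
    intro j hj a ha
    exact hs j (by omega) a (by rwa [show j + 1 = 0 + 1 + j by omega])

lemma target_sat (D : Inst) (A : Atom) (n : ℕ) :
    Query.sat D (Query.evtl (Query.and (Query.atom A) (nextIter n (Query.atom A)))) 0 ↔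
      ∃ m, 0 < m ∧ (A, m) ∈ D ∧ (A, m + n) ∈ D := by
  show (∃ m, 0 < m ∧ (A, m) ∈ D ∧ Query.sat D (nextIter n (Query.atom A)) m) ↔ _
  refine exists_congr fun m => and_congr_right fun _ => and_congr_right fun _ => ?_
  rw [nextIter_sat]
  rfl

lemma evtlA_sat (D : Inst) (A : Atom) :
    Query.sat D (Query.evtl (Query.atom A)) 0 ↔ ∃ m, 0 < m ∧ (A, m) ∈ D := Iff.rfl

/-- Over `σ = {A}`, every strengthening frontier for `◇A` in
`𝒬_in^σ` contains, for each `n > 0`, a query equivalent to `◇(A ∧ ○ⁿA)`; hence it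
contains infinitely many pairwise non-equivalent queries. -/
theorem statement_11 (A : Atom) (F : Set Query)
    (hF : StrengtheningFrontier (QinSig {A}) (Query.evtl (Query.atom A)) F) :
    (∀ n, 0 < n → ∃ q' ∈ F,
        QEquiv q' (Query.evtl (Query.and (Query.atom A) (nextIter n (Query.atom A))))) ∧
    ∃ g : ℕ → Query, (∀ n, g n ∈ F) ∧ ∀ n m, n ≠ m → ¬ QEquiv (g n) (g m) := by
  obtain ⟨hFQ, hFstrict, hFcomp⟩ := hF
  set tgt : ℕ → Query :=
    fun n => Query.evtl (Query.and (Query.atom A) (nextIter n (Query.atom A))) with htgt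
  have key : ∀ n, 0 < n → ∃ q' ∈ F, QEquiv q' (tgt n) := by
    intro n hn
    -- the witness interval query equivalent to ◇(A ∧ ○ⁿA)
    set ρt : ℕ → Finset Atom := fun i => if i = 1 ∨ i = n + 1 then {A} else ∅ with hρt
    set q₂ : Query := pathQ (n + 1) ρt intervalOps with hq₂
    have hq₂in : q₂ ∈ QinSig {A} := by
      refine ⟨n + 1, ρt, by omega, ?_, ?_, ?_, rfl⟩
      · simp only [hρt]; rw [if_neg (by omega)]
      · simp [hρt]
      · intro i _
        simp only [hρt]
        split <;> simp
    have hρt0 : ρt 0 = ∅ := by simp only [hρt]; rw [if_neg (by omega)]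
    have hq₂sat : ∀ D : Inst, Query.sat D q₂ 0 ↔
        ∃ m, 0 < m ∧ (A, m) ∈ D ∧ (A, m + n) ∈ D := by
      intro D
      rw [hq₂, pathQ_interval_sat D (n + 1) ρt (by omega) hρt0]
      have hA_mem : ∀ i, i = 1 ∨ i = n + 1 → A ∈ ρt i := by
        intro i hi
        simp only [hρt]
        rw [if_pos hi]
        exact Finset.mem_singleton_self A
      constructor
      · rintro ⟨m, hm, hs⟩
        refine ⟨m, hm, ?_, ?_⟩
        · simpa using hs 0 (by omega) A (hA_mem (0 + 1) (by omega))
        · simpa using hs n (by omega) A (hA_mem (n + 1) (by omega))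
      · rintro ⟨m, hm, h1, h2⟩
        refine ⟨m, hm, fun j hj a ha => ?_⟩
        simp only [hρt] at ha
        split_ifs at ha with hcase
        · rw [Finset.mem_singleton] at ha
          subst ha
          rcases hcase with h | h
          · have : j = 0 := by omega
            subst this; simpa using h1
          · have : j = n := by omega
            subst this; exact h2
        · exact absurd ha (Finset.notMem_empty a)
    have hq₂ent : Entails q₂ (Query.evtl (Query.atom A)) := by
      intro D _ hs
      rw [hq₂sat D] at hs
      obtain ⟨m, hm, h1, _⟩ := hs
      exact (evtlA_sat D A).mpr ⟨m, hm, h1⟩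
    have hq₂neq : ¬ QEquiv q₂ (Query.evtl (Query.atom A)) := by
      rintro ⟨-, h2⟩
      have hD : ({(A, 1)} : Inst).Nonempty := ⟨(A, 1), by simp⟩
      have hsA : Query.sat {(A, 1)} (Query.evtl (Query.atom A)) 0 :=
        (evtlA_sat _ A).mpr ⟨1, one_pos, by simp⟩
      have := (hq₂sat {(A, 1)}).mp (h2 _ hD hsA)
      obtain ⟨m, hm, h1, h2'⟩ := this
      rw [Finset.mem_singleton, Prod.mk.injEq] at h1 h2'
      omega
    obtain ⟨q', hq'F, hEnt⟩ := hFcomp q₂ hq₂in hq₂ent hq₂neq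
    obtain ⟨hq'entA, hq'neq⟩ := hFstrict q' hq'F
    obtain ⟨n', ρ', hn', h0', h1', hsub', hq'eq⟩ := hFQ hq'F
    have hq's : ∀ D : Inst, Query.sat D q' 0 ↔
        ∃ m, 0 < m ∧ ∀ j < n', ∀ a ∈ ρ' (j + 1), (a, m + j) ∈ D := by
      intro D; rw [hq'eq]; exact pathQ_interval_sat D n' ρ' hn' h0'
    have hmemA : ∀ i ≤ n', ρ' i ≠ ∅ → A ∈ ρ' i := by
      intro i hi hne
      obtain ⟨a, ha⟩ := Finset.nonempty_iff_ne_empty.mpr hne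
      have := hsub' i hi ha
      rw [Finset.mem_singleton] at this
      subst this; exact ha
    have hA1 : A ∈ ρ' 1 := hmemA 1 hn' h1'
    -- there must be a second required position
    have hsecond : ∃ t, 1 ≤ t ∧ t < n' ∧ ρ' (t + 1) ≠ ∅ := by
      by_contra hcon
      push_neg at hcon
      apply hq'neq
      refine ⟨hq'entA, ?_⟩
      intro D _ hs
      obtain ⟨m, hm, hAmm⟩ := (evtlA_sat D A).mp hs
      rw [hq's D]
      refine ⟨m, hm, fun j hj a ha => ?_⟩
      rcases Nat.eq_zero_or_pos j with rfl | hjp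
      · have : a = A := by
          have := hsub' 1 hn' ha
          rwa [Finset.mem_singleton] at this
        subst this; simpa using hAmm
      · rw [hcon j hjp hj] at ha
        exact absurd ha (Finset.notMem_empty a)
    obtain ⟨t, ht1, htn, htne⟩ := hsecond
    -- canonical model of q₂
    set Dn : Inst := {(A, 1), (A, 1 + n)} with hDn
    have hDnmem : ∀ a k, (a, k) ∈ Dn ↔ a = A ∧ (k = 1 ∨ k = 1 + n) := by
      intro a k
      simp only [hDn, Finset.mem_insert, Finset.mem_singleton, Prod.mk.injEq]
      tauto
    have hDnne : Dn.Nonempty := ⟨(A, 1), by rw [hDnmem]; exact ⟨rfl, Or.inl rfl⟩⟩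
    have hDnq₂ : Query.sat Dn q₂ 0 := by
      rw [hq₂sat]
      exact ⟨1, one_pos, by rw [hDnmem]; exact ⟨rfl, Or.inl rfl⟩,
        by rw [hDnmem]; exact ⟨rfl, Or.inr rfl⟩⟩
    have hDnq' := (hq's Dn).mp (hEnt Dn hDnne hDnq₂)
    obtain ⟨m, hm, hall⟩ := hDnq'
    have hm0 : m = 1 ∨ m = 1 + n := by
      have := hall 0 (by omega) A hA1
      rw [hDnmem] at this
      simpa using this.2
    have hmt : m + t = 1 ∨ m + t = 1 + n := by
      have := hall t htn A (hmemA (t + 1) (by omega) htne)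
      rw [hDnmem] at this
      exact this.2
    have hm1 : m = 1 := by omega
    have htn' : t = n := by omega
    have hnn' : n < n' := htn' ▸ htn
    have hρn : ρ' (n + 1) ≠ ∅ := htn' ▸ htne
    -- key structural fact: required positions are exactly 0 and n
    have hpos : ∀ j < n', ρ' (j + 1) ≠ ∅ → j = 0 ∨ j = n := by
      intro j hj hne
      have := hall j hj A (hmemA (j + 1) (by omega) hne)
      rw [hDnmem] at this
      omega
    refine ⟨q', hq'F, ?_, ?_⟩
    · -- q' entails the target
      intro D _ hs
      rw [hq's D] at hs
      obtain ⟨m, hm, hs⟩ := hs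
      rw [htgt, target_sat]
      refine ⟨m, hm, ?_, ?_⟩
      · simpa using hs 0 (by omega) A hA1
      · exact hs n hnn' A (hmemA (n + 1) (by omega) hρn)
    · -- target entails q'
      intro D _ hs
      rw [htgt, target_sat] at hs
      obtain ⟨m, hm, h1, h2⟩ := hs
      rw [hq's D]
      refine ⟨m, hm, fun j hj a ha => ?_⟩
      have haA : a = A := by
        have := hsub' (j + 1) (by omega) ha
        rwa [Finset.mem_singleton] at this
      rw [haA]
      rw [haA] at ha
      have hne : ρ' (j + 1) ≠ ∅ := by
        intro h
        rw [h] at ha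
        exact absurd ha (Finset.notMem_empty A)
      rcases hpos j hj hne with rfl | rfl
      · simpa using h1
      · exact h2
  -- now for infiniteness
  have tgt_not_ent : ∀ n m : ℕ, n ≠ m → ¬ Entails (tgt (n + 1)) (tgt (m + 1)) := by
    intro n m hne hent
    set D : Inst := {(A, 1), (A, n + 2)} with hD
    have hDmem : ∀ a k, (a, k) ∈ D ↔ a = A ∧ (k = 1 ∨ k = n + 2) := by
      intro a k
      simp only [hD, Finset.mem_insert, Finset.mem_singleton, Prod.mk.injEq]
      tauto
    have hDne : D.Nonempty := ⟨(A, 1), by rw [hDmem]; exact ⟨rfl, Or.inl rfl⟩⟩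
    have hsat : Query.sat D (tgt (n + 1)) 0 := by
      rw [htgt, target_sat]
      exact ⟨1, one_pos, by rw [hDmem]; exact ⟨rfl, Or.inl rfl⟩,
        by rw [hDmem]; exact ⟨rfl, Or.inr (by omega)⟩⟩
    have := hent D hDne hsat
    rw [htgt, target_sat] at this
    obtain ⟨k, hk, h1, h2⟩ := this
    rw [hDmem] at h1 h2
    omega
  refine ⟨key, ?_⟩
  choose g hgF hgeq using fun n => key (n + 1) (Nat.succ_pos n)
  refine ⟨g, hgF, fun n m hne hcon => ?_⟩
  apply tgt_not_ent n m hne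
  intro D hD hs
  exact (hgeq m).1 D hD (hcon.1 D hD ((hgeq n).2 D hD hs))
end
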